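/- arXiv:0706.1526 — 2 statements merged into one kernel-verified Lean document; each statement's English description precedes it below -/
import Mathlib

section
/- The square of F₆ is 7-colorable, yet the greedy (first-fit) algorithm can fail to color it optimally: there exist a linear order < on the 12 vertices of F₆ and a function c from the vertices to ℕ such that for every vertex v, c(v) is the least natural number not belonging to {c(u) : u < v and u is adjacent to v in F₆²}, and c attains a value ≥ 7 (i.e., this greedy coloring uses at least 8 colors). -/
open SimpleGraph

/-- The square `G²` of a simple graph `G`: two distinct vertices are adjacent iff
they are adjacent in `G` or have a common neighbor in `G`. -/
def SimpleGraph.square {V : Type*} (G : SimpleGraph V) : SimpleGraph V where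
  Adj u v := u ≠ v ∧ (G.Adj u v ∨ ∃ w, G.Adj u w ∧ G.Adj w v)
  symm := by
    constructor
    rintro u v ⟨hne, h | ⟨w, h1, h2⟩⟩
    · exact ⟨hne.symm, Or.inl h.symm⟩
    · exact ⟨hne.symm, Or.inr ⟨w, h2.symm, h1.symm⟩⟩
  loopless := ⟨fun u h => h.1 rfl⟩

/-- A finite simple graph is outerplanar iff it has a one-page book embedding:
a linear order (here realized by an injection into `ℕ`) on its vertices such that
no two edges "cross", i.e. there are no vertices `a < c < b < d` with both
`{a,b}` and `{c,d}` edges. -/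
def SimpleGraph.IsOuterplanar {V : Type*} (G : SimpleGraph V) : Prop :=
  ∃ f : V → ℕ, Function.Injective f ∧
    ∀ a b c d : V, G.Adj a b → G.Adj c d →
      ¬(f a < f c ∧ f c < f b ∧ f b < f d)

/-- The degree of a vertex, as the cardinality of its neighbor set. -/
noncomputable def SimpleGraph.deg {V : Type*} (G : SimpleGraph V) (v : V) : ℕ :=
  (G.neighborSet v).ncard

/-- The maximum degree `Δ` of a finite graph. -/
noncomputable def SimpleGraph.maxDeg {V : Type*} [Fintype V] (G : SimpleGraph V) : ℕ :=
  Finset.univ.sup fun v => G.deg v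

/-- The degree of `v` inside the subgraph of `G` induced by the vertex set `s`. -/
noncomputable def SimpleGraph.degIn {V : Type*} (G : SimpleGraph V) (s : Finset V) (v : V) : ℕ :=
  {u | u ∈ s ∧ G.Adj v u}.ncard

/-- The inductiveness (degeneracy) of a finite graph: the maximum over all nonempty
induced subgraphs of the minimum degree of the induced subgraph. -/
noncomputable def SimpleGraph.inductiveness {V : Type*} [Fintype V]
    (G : SimpleGraph V) : ℕ :=
  Finset.univ.powerset.sup fun s =>
    if h : s.Nonempty then s.inf' h (G.degIn s) else 0

/-- A graph is chordal if every cycle of length at least 4 has a chord: two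
vertices of the cycle, adjacent in the graph, whose joining edge is not an edge
of the cycle (i.e. they are nonconsecutive on the cycle). -/
def SimpleGraph.IsChordal {V : Type*} (G : SimpleGraph V) : Prop :=
  ∀ ⦃v : V⦄ (w : G.Walk v v), w.IsCycle → 4 ≤ w.length →
    ∃ a b : V, a ∈ w.support ∧ b ∈ w.support ∧ G.Adj a b ∧ s(a, b) ∉ w.edges

/-- A finite graph is biconnected if it has at least 3 vertices, is connected,
and deleting any single vertex leaves it connected. -/
def SimpleGraph.Biconnected {V : Type*} [Fintype V] (G : SimpleGraph V) : Prop :=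
  3 ≤ Fintype.card V ∧ G.Connected ∧
    ∀ v : V, ((G.induce {u | u ≠ v}).Connected)

/-- `G` is `k`-choosable: for every assignment of lists of exactly `k` colors to
the vertices there is a proper coloring choosing each vertex's color from its list. -/
def SimpleGraph.Choosable {V : Type*} (G : SimpleGraph V) (k : ℕ) : Prop :=
  ∀ L : V → Finset ℕ, (∀ v, (L v).card = k) →
    ∃ c : V → ℕ, (∀ v, c v ∈ L v) ∧ ∀ u v, G.Adj u v → c u ≠ c v

/-- `F₄`: the 6-vertex graph obtained from the triangle `0 1 2` by adding, for each
edge of the triangle, a new vertex (`3 = y₀₁`, `4 = y₁₂`, `5 = y₀₂`) adjacent to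
exactly the two endpoints of that edge. -/
def F4 : SimpleGraph (Fin 6) :=
  SimpleGraph.fromEdgeSet
    {s(0, 1), s(1, 2), s(0, 2), s(3, 0), s(3, 1), s(4, 1), s(4, 2), s(5, 0), s(5, 2)}

/-- `F₆`: the 12-vertex graph obtained from `F₄` by adding, for each of the six edges
`xᵢyᵢⱼ` between a triangle vertex and an added vertex, a new vertex adjacent to
exactly the two endpoints of that edge (vertices `6,…,11`). -/
def F6 : SimpleGraph (Fin 12) :=
  SimpleGraph.fromEdgeSet
    {s(0, 1), s(1, 2), s(0, 2), s(3, 0), s(3, 1), s(4, 1), s(4, 2), s(5, 0), s(5, 2),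
     s(6, 0), s(6, 3), s(7, 1), s(7, 3), s(8, 1), s(8, 4), s(9, 2), s(9, 4),
     s(10, 0), s(10, 5), s(11, 2), s(11, 5)}

/-- The rigid ladder `RL n`.  For even `n = 2k` it has vertices `u₁,…,u_k,v₁,…,v_k`
and edges `uᵢvᵢ, uᵢuᵢ₊₁, uᵢvᵢ₊₁, vᵢvᵢ₊₁` (for `1 ≤ i ≤ k-1`) together with `u_k v_k`;
for odd `n` it is `RL (n+1)` with the vertex `u_{(n+1)/2}` deleted.  We use the zigzag
labelling `vᵢ ↦ 2i - 2`, `uᵢ ↦ 2i - 1` (under which deleting `u_{(n+1)/2} = n` from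
`RL (n+1)` leaves exactly the labels `0,…,n-1`); under this labelling two vertices are
adjacent iff their labels differ by exactly 1 or 2. -/
def rigidLadder (n : ℕ) : SimpleGraph (Fin n) where
  Adj a b := a ≠ b ∧ Nat.dist a.val b.val ≤ 2
  symm := by
    constructor
    rintro a b ⟨h1, h2⟩
    exact ⟨h1.symm, by rwa [Nat.dist_comm]⟩
  loopless := ⟨fun a h => h.1 rfl⟩

/-! Both halves are finite checks. `F₆²` has the explicit proper 7-colouring below. For
first-fit, the vertices are coloured in the order `6, 11, 9, 4, 8, 1, 10, 7, 3, 5, 2, 0`;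
the first eleven receive colours `≤ 6` in such a way that the triangle vertex `x₀ = 0`,
which is adjacent in `F₆²` to all of them, finds every colour `0, …, 6` taken and gets `7`. -/

-- The 21-fold `insert` chain defining the edge set exceeds the default instance size.
set_option synthInstance.maxSize 1000 in
instance : DecidableRel F6.Adj := by
  unfold F6
  infer_instance

instance SimpleGraph.square.instDecidableRelAdj {V : Type*} [Fintype V] [DecidableEq V]
    (G : SimpleGraph V) [DecidableRel G.Adj] : DecidableRel G.square.Adj :=
  fun u v => inferInstanceAs (Decidable (u ≠ v ∧ (G.Adj u v ∨ ∃ w, G.Adj u w ∧ G.Adj w v)))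

theorem SimpleGraph.eq_sInf_of_free_of_lt_used {V α : Type*} [LT α] (G : SimpleGraph V)
    (e : V → α) (c : V → ℕ) (v : V) (hfree : ∀ u, e u < e v → G.Adj u v → c u ≠ c v)
    (hused : ∀ m < c v, ∃ u, e u < e v ∧ G.Adj u v ∧ c u = m) :
    c v = sInf {n : ℕ | ∀ u, e u < e v → G.Adj u v → c u ≠ n} := by
  refine (IsLeast.csInf_eq (s := {n : ℕ | ∀ u, e u < e v → G.Adj u v → c u ≠ n})
    ⟨hfree, fun n hn => not_lt.1 fun hlt => ?_⟩).symm
  obtain ⟨u, hu, hadj, rfl⟩ := hused n hlt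
  exact hn u hu hadj rfl

theorem F6_square_colorable : F6.square.Colorable 7 :=
  ⟨Coloring.mk (![0, 1, 2, 3, 4, 5, 4, 6, 5, 6, 6, 3] : Fin 12 → Fin 7) (by decide)⟩

/-- The position of each vertex in the first-fit order. -/
noncomputable def firstFitOrder : Fin 12 ≃ Fin 12 :=
  Equiv.ofBijective ![11, 5, 10, 8, 3, 9, 0, 7, 4, 2, 6, 1] (by decide)

def firstFitColor : Fin 12 → ℕ := ![7, 3, 6, 4, 2, 5, 0, 1, 0, 1, 1, 0]

theorem firstFitColor_free_and_lt_used (v : Fin 12) :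
    (∀ u, firstFitOrder u < firstFitOrder v → F6.square.Adj u v →
      firstFitColor u ≠ firstFitColor v) ∧
    ∀ m < firstFitColor v, ∃ u, firstFitOrder u < firstFitOrder v ∧ F6.square.Adj u v ∧
      firstFitColor u = m := by
  revert v
  decide

/-- `F₆²` is 7-colorable, yet greedy (first-fit) coloring can fail
to be optimal: there is a linear order on the 12 vertices of `F₆` (given by an
equivalence `e` with the standard order on `Fin 12`) and a function `c` such that
every vertex gets the least color not used among its earlier neighbors in `F₆²`,
while `c` attains a value `≥ 7` (so this greedy coloring uses at least 8 colors). -/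
theorem stmt11 :
    F6.square.Colorable 7 ∧
    ∃ (e : Fin 12 ≃ Fin 12) (c : Fin 12 → ℕ),
      (∀ v, c v = sInf {n : ℕ | ∀ u, e u < e v → F6.square.Adj u v → c u ≠ n}) ∧
      ∃ v, 7 ≤ c v :=
  ⟨F6_square_colorable, firstFitOrder, firstFitColor,
    fun v => F6.square.eq_sInf_of_free_of_lt_used _ _ v
      (firstFitColor_free_and_lt_used v).1 (firstFitColor_free_and_lt_used v).2,
    0, le_rfl⟩
end

section
/- Let G be a finite outerplanar simple graph with maximum degree Δ ≥ 5. Then ω(G²) = Δ + 1. -/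
open SimpleGraph

/-!
Fix a one-page book embedding. A vertex of maximum degree together with its neighbours is a
clique of `G²` of size `Δ + 1`, and cliques with at most `6 ≤ Δ + 1` vertices are harmless, so
it suffices to show that every clique `S` of `G²` with at least seven vertices lies in the closed
neighbourhood of a single vertex.

Let `m` be the middle one of seven vertices of `S`. If some `t ∈ S`, say to the right of `m`, is
not adjacent to `m`, then the path of length at most two from the leftmost of the seven vertices
to `t` gives an edge passing over `m`; let `pq` be the innermost one. Since edges do not cross, no
edge leaves any of the intervals `(p, q)`, `(p, m)`, `(m, q)` except at an endpoint, so two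
vertices of `S` on different sides of such an interval are joined through one of its endpoints.
A case analysis on which of `(p, m)` and `(m, q)` meet `S` then shows that `p` or `q` is adjacent
to all other vertices of `S`; reversing the order handles `t` to the left of `m`.
-/

open Set

namespace SimpleGraph

variable {V : Type*}

def closedNeighborSet (G : SimpleGraph V) (v : V) : Set V := insert v (G.neighborSet v)

section Noncrossing

variable [LinearOrder V] {G : SimpleGraph V} {S : Set V} {m p q : V}

def IsNoncrossing (G : SimpleGraph V) : Prop :=
  ∀ ⦃a b c d : V⦄, G.Adj a c → G.Adj b d → a < b → b < c → c < d → False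

theorem IsNoncrossing.dual (hG : G.IsNoncrossing) : IsNoncrossing (V := Vᵒᵈ) G :=
  fun _ _ _ _ hac hbd hab hbc hcd => hG hbd.symm hac.symm hcd hbc hab

def IsSealed (G : SimpleGraph V) (u v : V) : Prop :=
  ∀ ⦃x y : V⦄, x ∈ Ioo u v → G.Adj x y → y ∈ Icc u v

theorem IsNoncrossing.isSealed (hG : G.IsNoncrossing) {u v : V} (huv : G.Adj u v) :
    G.IsSealed u v := by
  rintro x y ⟨hux, hxv⟩ hxy
  by_contra hy
  rcases not_and_or.1 hy with hy | hy
  · exact hG hxy.symm huv (not_le.1 hy) hux hxv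
  · exact hG huv hxy hux hxv (not_le.1 hy)

theorem IsSealed.adj_endpoint_of_square_adj {u v x z : V} (h : G.IsSealed u v)
    (hz : z ∈ Ioo u v) (hx : x ∉ Icc u v) (hxz : G.square.Adj x z) :
    G.Adj x u ∧ G.Adj u z ∨ G.Adj x v ∧ G.Adj v z := by
  obtain ⟨-, hxz | ⟨w, hxw, hwz⟩⟩ := hxz
  · exact absurd (h hz hxz.symm) hx
  obtain ⟨huw, hwv⟩ := h hz hwz.symm
  rcases huw.eq_or_lt with rfl | huw
  · exact Or.inl ⟨hxw, hwz⟩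
  rcases hwv.eq_or_lt with rfl | hwv
  · exact Or.inr ⟨hxw, hwz⟩
  · exact absurd (h ⟨huw, hwv⟩ hxw.symm) hx

theorem exists_adj_over_of_square_adj {x y : V}
    (hxm : x < m) (hmy : m < y) (hxy : G.square.Adj x y) (hmy' : ¬G.Adj m y) :
    ∃ a b, G.Adj a b ∧ a < m ∧ m < b := by
  obtain ⟨-, hxy | ⟨w, hxw, hwy⟩⟩ := hxy
  · exact ⟨x, y, hxy, hxm, hmy⟩
  rcases lt_trichotomy w m with hwm | rfl | hmw
  · exact ⟨w, y, hwy, hwm, hmy⟩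
  · exact absurd hwy hmy'
  · exact ⟨x, w, hxw, hxm, hmw⟩

structure IsInnermostOver (G : SimpleGraph V) (m p q : V) : Prop where
  adj : G.Adj p q
  lt_mid : p < m
  mid_lt : m < q
  le_of_adj ⦃a b : V⦄ : G.Adj a b → a < m → m < b → a ≤ p ∧ q ≤ b

theorem IsNoncrossing.exists_isInnermostOver [Finite V] (hG : G.IsNoncrossing) {a b : V}
    (hab : G.Adj a b) (ham : a < m) (hmb : m < b) : ∃ p q, G.IsInnermostOver m p q := by
  obtain ⟨p, ⟨hpm, b', hpb', hmb'⟩, hp⟩ := exists_max_image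
    {x | x < m ∧ ∃ y, G.Adj x y ∧ m < y} id (toFinite _) ⟨a, ham, b, hab, hmb⟩
  obtain ⟨q, ⟨hpq, hmq⟩, hq⟩ :=
    exists_min_image {y | G.Adj p y ∧ m < y} id (toFinite _) ⟨b', hpb', hmb'⟩
  refine ⟨p, q, hpq, hpm, hmq, fun x y hxy hxm hmy => ?_⟩
  have hxp : x ≤ p := hp x ⟨hxm, y, hxy, hmy⟩
  refine ⟨hxp, ?_⟩
  rcases hxp.eq_or_lt with rfl | hxp
  · exact hq y ⟨hxy, hmy⟩
  · exact not_lt.1 fun hyq => hG hxy hpq hxp (hpm.trans hmy) hyq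

theorem IsNoncrossing.adj_of_forall_adj_or_adj (hG : G.IsNoncrossing)
    (hS : G.square.IsClique S) (hpq : p < q) {a₁ a₂ b₁ b₂ : V} (ha₂ : a₂ ∈ S) (hb₁ : b₁ ∈ S)
    (hb₂ : b₂ ∈ S) (ha : a₁ < a₂) (ha₂p : a₂ < p) (hqb₁ : q < b₁) (hb : b₁ < b₂)
    (hpa₁ : G.Adj p a₁) (hR : ∀ r ∈ S, q < r → G.Adj p r ∨ G.Adj q r) :
    ∀ r ∈ S, q < r → G.Adj p r := by
  intro r hr hqr
  by_contra hpr
  obtain ⟨r, hr, hqr, hrb₂, hpr⟩ : ∃ r ∈ S, q < r ∧ r < b₂ ∧ ¬G.Adj p r := by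
    rcases lt_or_ge r b₂ with hrb₂ | hb₂r
    · exact ⟨r, hr, hqr, hrb₂, hpr⟩
    by_cases hpb₁ : G.Adj p b₁
    · exact ((hR r hr hqr).elim hpr fun hqr' => hG hpb₁ hqr' hpq hqb₁ (hb.trans_le hb₂r)).elim
    · exact ⟨b₁, hb₁, hqb₁, hb, hpb₁⟩
  have hqr' : G.Adj q r := (hR r hr hqr).resolve_left hpr
  have ha₁r : G.Adj a₁ r := by
    rcases (hG.isSealed hpa₁.symm).adj_endpoint_of_square_adj ⟨ha, ha₂p⟩
        (notMem_Icc_of_gt (hpq.trans hqr)) (hS hr ha₂ (ha₂p.trans (hpq.trans hqr)).ne') with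
      ⟨hra₁, -⟩ | ⟨hrp, -⟩
    · exact hra₁.symm
    · exact absurd hrp.symm hpr
  rcases hR b₂ hb₂ (hqb₁.trans hb) with hpb₂ | hqb₂
  · exact hG ha₁r hpb₂ (ha.trans ha₂p) (hpq.trans hqr) hrb₂
  · exact hG ha₁r hqb₂ ((ha.trans ha₂p).trans hpq) hqr hrb₂

namespace IsInnermostOver

theorem mem_Ioo (h : G.IsInnermostOver m p q) : m ∈ Ioo p q := ⟨h.lt_mid, h.mid_lt⟩

theorem isSealed (h : G.IsInnermostOver m p q) (hG : G.IsNoncrossing) : G.IsSealed p q :=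
  hG.isSealed h.adj

theorem isSealed_left (h : G.IsInnermostOver m p q) (hG : G.IsNoncrossing) :
    G.IsSealed p m := by
  intro x y hx hxy
  have hy := h.isSealed hG ⟨hx.1, hx.2.trans h.mid_lt⟩ hxy
  exact ⟨hy.1, not_lt.1 fun hmy => (h.le_of_adj hxy hx.2 hmy).1.not_gt hx.1⟩

theorem isSealed_right (h : G.IsInnermostOver m p q) (hG : G.IsNoncrossing) :
    G.IsSealed m q := by
  intro x y hx hxy
  have hy := h.isSealed hG ⟨h.lt_mid.trans hx.1, hx.2⟩ hxy
  exact ⟨not_lt.1 fun hym => (h.le_of_adj hxy.symm hym hx.1).2.not_gt hx.2, hy.2⟩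

theorem adj_left_of_notMem_Icc (h : G.IsInnermostOver m p q) (hG : G.IsNoncrossing)
    (hS : G.square.IsClique S) {l s : V} (hl : l ∈ S) (hl' : l ∈ Ioo p m) (hs : s ∈ S)
    (hs' : s ∉ Icc p q) : G.Adj p s := by
  have hsl : s ≠ l := by rintro rfl; exact hs' ⟨hl'.1.le, (hl'.2.trans h.mid_lt).le⟩
  rcases (h.isSealed_left hG).adj_endpoint_of_square_adj hl'
      (fun hs'' => hs' (Icc_subset_Icc_right h.mid_lt.le hs'')) (hS hs hl hsl) with
    ⟨hsp, -⟩ | ⟨hsm, -⟩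
  · exact hsp.symm
  · exact absurd (h.isSealed hG h.mem_Ioo hsm.symm) hs'

theorem adj_right_of_notMem_Icc (h : G.IsInnermostOver m p q) (hG : G.IsNoncrossing)
    (hS : G.square.IsClique S) {r s : V} (hr : r ∈ S) (hr' : r ∈ Ioo m q) (hs : s ∈ S)
    (hs' : s ∉ Icc p q) : G.Adj q s := by
  have hsr : s ≠ r := by rintro rfl; exact hs' ⟨(h.lt_mid.trans hr'.1).le, hr'.2.le⟩
  rcases (h.isSealed_right hG).adj_endpoint_of_square_adj hr'
      (fun hs'' => hs' (Icc_subset_Icc_left h.lt_mid.le hs'')) (hS hs hr hsr) with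
    ⟨hsm, -⟩ | ⟨hsq, -⟩
  · exact absurd (h.isSealed hG h.mem_Ioo hsm.symm) hs'
  · exact hsq.symm

theorem adj_left_of_mem_Ioo_left (h : G.IsInnermostOver m p q) (hG : G.IsNoncrossing)
    (hS : G.square.IsClique S) {t s : V} (ht : t ∈ S) (hmt : m < t) (hnadj : ¬G.Adj m t)
    (hs : s ∈ S) (hs' : s ∈ Ioo p m) : G.Adj p s := by
  rcases (h.isSealed_left hG).adj_endpoint_of_square_adj hs' (notMem_Icc_of_gt hmt)
      (hS ht hs (hs'.2.trans hmt).ne') with ⟨-, hps⟩ | ⟨htm, -⟩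
  · exact hps
  · exact absurd htm.symm hnadj

theorem adj_right_of_mem_Ioo_right (h : G.IsInnermostOver m p q) (hG : G.IsNoncrossing)
    (hS : G.square.IsClique S) {l s : V} (hl : l ∈ S) (hlp : l < p) (hs : s ∈ S)
    (hs' : s ∈ Ioo m q) : G.Adj q s := by
  rcases (h.isSealed hG).adj_endpoint_of_square_adj ⟨h.lt_mid.trans hs'.1, hs'.2⟩
      (notMem_Icc_of_lt hlp) (hS hl hs (hlp.trans (h.lt_mid.trans hs'.1)).ne) with
    ⟨-, hps⟩ | ⟨-, hqs⟩
  · exact absurd (h.isSealed_right hG hs' hps.symm).1 h.lt_mid.not_ge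
  · exact hqs

theorem adj_mid (h : G.IsInnermostOver m p q) (hG : G.IsNoncrossing)
    (hS : G.square.IsClique S) {l r : V} (hl : l ∈ S) (hl' : l ∈ Ioo p m) (hr : r ∈ S)
    (hr' : r ∈ Ioo m q) : G.Adj l m ∧ G.Adj m r := by
  rcases (h.isSealed_right hG).adj_endpoint_of_square_adj hr' (notMem_Icc_of_lt hl'.2)
      (hS hl hr (hl'.2.trans hr'.1).ne) with hlmr | ⟨hlq, -⟩
  · exact hlmr
  · exact absurd (h.isSealed_left hG hl' hlq).2 h.mid_lt.not_ge

theorem subset_closedNeighborSet (h : G.IsInnermostOver m p q) {v : V} (hv : v = p ∨ v = q)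
    (hout : ∀ s ∈ S, s ∉ Icc p q → G.Adj v s) (hleft : ∀ s ∈ S, s ∈ Ioo p m → G.Adj v s)
    (hmid : G.Adj v m) (hright : ∀ s ∈ S, s ∈ Ioo m q → G.Adj v s) :
    S ⊆ G.closedNeighborSet v := by
  intro s hs
  rw [closedNeighborSet, mem_insert_iff, mem_neighborSet]
  by_cases hsv : s = v
  · exact Or.inl hsv
  refine Or.inr ?_
  by_cases hs' : s ∈ Icc p q
  swap
  · exact hout s hs hs'
  rcases hs'.1.eq_or_lt with rfl | hps
  · rcases hv with rfl | rfl
    exacts [(hsv rfl).elim, h.adj.symm]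
  rcases hs'.2.eq_or_lt with rfl | hsq
  · rcases hv with rfl | rfl
    exacts [h.adj, (hsv rfl).elim]
  rcases lt_trichotomy s m with hsm | rfl | hms
  exacts [hleft s hs ⟨hps, hsm⟩, hmid, hright s hs ⟨hms, hsq⟩]

theorem subset_closedNeighborSet_left (h : G.IsInnermostOver m p q) (hG : G.IsNoncrossing)
    (hS : G.square.IsClique S) (hm : m ∈ S) {t l b₁ b₂ : V} (ht : t ∈ S) (hmt : m < t)
    (hnadj : ¬G.Adj m t) (hl : l ∈ S) (hl' : l ∈ Ioo p m) (hB : ∀ s ∈ S, s ∉ Ioo m q)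
    (hb₁ : b₁ ∈ S) (hb₂ : b₂ ∈ S) (hqb₁ : q < b₁) (hb : b₁ < b₂) :
    S ⊆ G.closedNeighborSet p := by
  have hpb₁ := h.adj_left_of_notMem_Icc hG hS hl hl' hb₁ (notMem_Icc_of_gt hqb₁)
  have hpm : G.Adj p m := by
    rcases (h.isSealed hG).adj_endpoint_of_square_adj h.mem_Ioo
        (notMem_Icc_of_gt (hqb₁.trans hb)) (hS hb₂ hm (h.mid_lt.trans (hqb₁.trans hb)).ne') with
      ⟨-, hpm⟩ | ⟨hb₂q, -⟩
    · exact hpm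
    · exact (hG hpb₁ hb₂q.symm (h.lt_mid.trans h.mid_lt) hqb₁ hb).elim
  exact h.subset_closedNeighborSet (Or.inl rfl)
    (fun s hs hs' => h.adj_left_of_notMem_Icc hG hS hl hl' hs hs')
    (fun s hs hs' => h.adj_left_of_mem_Ioo_left hG hS ht hmt hnadj hs hs') hpm
    (fun s hs hs' => absurd hs' (hB s hs))

theorem subset_closedNeighborSet_right (h : G.IsInnermostOver m p q) (hG : G.IsNoncrossing)
    (hS : G.square.IsClique S) (hm : m ∈ S) {r a₁ a₂ : V} (hr : r ∈ S) (hr' : r ∈ Ioo m q)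
    (hA : ∀ s ∈ S, s ∉ Ioo p m) (ha₁ : a₁ ∈ S) (ha₂ : a₂ ∈ S) (ha : a₁ < a₂) (ha₂p : a₂ < p) :
    S ⊆ G.closedNeighborSet q := by
  have hqa₂ := h.adj_right_of_notMem_Icc hG hS hr hr' ha₂ (notMem_Icc_of_lt ha₂p)
  have hqm : G.Adj q m := by
    rcases (h.isSealed hG).adj_endpoint_of_square_adj h.mem_Ioo
        (notMem_Icc_of_lt (ha.trans ha₂p)) (hS ha₁ hm ((ha.trans ha₂p).trans h.lt_mid).ne) with
      ⟨ha₁p, -⟩ | ⟨-, hqm⟩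
    · exact (hG ha₁p hqa₂.symm ha ha₂p (h.lt_mid.trans h.mid_lt)).elim
    · exact hqm
  exact h.subset_closedNeighborSet (Or.inr rfl)
    (fun s hs hs' => h.adj_right_of_notMem_Icc hG hS hr hr' hs hs')
    (fun s hs hs' => absurd hs' (hA s hs)) hqm
    (fun s hs hs' => h.adj_right_of_mem_Ioo_right hG hS ha₁ (ha.trans ha₂p) hs hs')

theorem exists_subset_closedNeighborSet (h : G.IsInnermostOver m p q) (hG : G.IsNoncrossing)
    (hS : G.square.IsClique S) (hm : m ∈ S) (hA : ∀ s ∈ S, s ∉ Ioo p m)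
    (hB : ∀ s ∈ S, s ∉ Ioo m q) {a₁ a₂ b₁ b₂ : V} (ha₁ : a₁ ∈ S) (ha₂ : a₂ ∈ S)
    (hb₁ : b₁ ∈ S) (hb₂ : b₂ ∈ S) (ha : a₁ < a₂) (ha₂p : a₂ < p) (hqb₁ : q < b₁)
    (hb : b₁ < b₂) : ∃ v, S ⊆ G.closedNeighborSet v := by
  have hpq := h.lt_mid.trans h.mid_lt
  have hub : ∀ s ∈ S, s ∉ Icc p q → G.Adj s p ∧ G.Adj p m ∨ G.Adj s q ∧ G.Adj q m :=
    fun s hs hs' => (h.isSealed hG).adj_endpoint_of_square_adj h.mem_Ioo hs'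
      (hS hs hm fun hsm => hs' (hsm ▸ Ioo_subset_Icc_self h.mem_Ioo))
  have houtside {s : V} (hs : s ∉ Icc p q) : s < p ∨ q < s := by
    simpa only [mem_Icc, not_and_or, not_le] using hs
  by_cases hα : ∃ l ∈ S, l < p ∧ G.Adj q l
  · obtain ⟨l, hl, hlp, hql⟩ := hα
    have hR : ∀ r ∈ S, q < r → G.Adj q r ∧ G.Adj q m := fun r hr hqr =>
      ((hub r hr (notMem_Icc_of_gt hqr)).resolve_left fun hrp =>
        hG hql.symm hrp.1.symm hlp hpq hqr).imp_left Adj.symm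
    have hL : ∀ l ∈ S, l < p → G.Adj q l :=
      hG.dual.adj_of_forall_adj_or_adj hS hpq hb₁ ha₂ ha₁ hb hqb₁ ha₂p ha
        (hR b₂ hb₂ (hqb₁.trans hb)).1
        (fun r hr hrp => (hub r hr (notMem_Icc_of_lt hrp)).symm.imp (·.1.symm) (·.1.symm))
    refine ⟨q, h.subset_closedNeighborSet (Or.inr rfl) (fun s hs hs' => ?_)
      (fun s hs hs' => absurd hs' (hA s hs)) (hR b₁ hb₁ hqb₁).2
      (fun s hs hs' => absurd hs' (hB s hs))⟩
    rcases houtside hs' with hsp | hqs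
    exacts [hL s hs hsp, (hR s hs hqs).1]
  · simp only [not_exists, not_and] at hα
    have hL : ∀ l ∈ S, l < p → G.Adj p l ∧ G.Adj p m := fun l hl hlp =>
      ((hub l hl (notMem_Icc_of_lt hlp)).resolve_right fun hlq =>
        hα l hl hlp hlq.1.symm).imp_left Adj.symm
    have hR : ∀ r ∈ S, q < r → G.Adj p r :=
      hG.adj_of_forall_adj_or_adj hS hpq ha₂ hb₁ hb₂ ha ha₂p hqb₁ hb
        (hL a₁ ha₁ (ha.trans ha₂p)).1
        (fun r hr hqr => (hub r hr (notMem_Icc_of_gt hqr)).imp (·.1.symm) (·.1.symm))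
    refine ⟨p, h.subset_closedNeighborSet (Or.inl rfl) (fun s hs hs' => ?_)
      (fun s hs hs' => absurd hs' (hA s hs)) (hL a₁ ha₁ (ha.trans ha₂p)).2
      (fun s hs hs' => absurd hs' (hB s hs))⟩
    rcases houtside hs' with hsp | hqs
    exacts [(hL s hs hsp).1, hR s hs hqs]

end IsInnermostOver

theorem IsNoncrossing.exists_subset_closedNeighborSet_of_not_adj [Finite V]
    (hG : G.IsNoncrossing) (hS : G.square.IsClique S) {a₁ a₂ a₃ b₁ b₂ b₃ t : V}
    (ha₁ : a₁ ∈ S) (ha₂ : a₂ ∈ S) (ha₃ : a₃ ∈ S) (hm : m ∈ S) (hb₁ : b₁ ∈ S) (hb₂ : b₂ ∈ S)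
    (hb₃ : b₃ ∈ S) (h₁ : a₁ < a₂) (h₂ : a₂ < a₃) (h₃ : a₃ < m) (h₄ : m < b₁) (h₅ : b₁ < b₂)
    (h₆ : b₂ < b₃) (ht : t ∈ S) (hmt : m < t) (hnadj : ¬G.Adj m t) :
    ∃ v, S ⊆ G.closedNeighborSet v := by
  have ha₁m : a₁ < m := h₁.trans (h₂.trans h₃)
  obtain ⟨x, y, hxy, hxm, hmy⟩ :=
    exists_adj_over_of_square_adj ha₁m hmt (hS ha₁ ht (ha₁m.trans hmt).ne) hnadj
  obtain ⟨p, q, h⟩ := hG.exists_isInnermostOver hxy hxm hmy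
  by_cases hA : ∃ l ∈ S, l ∈ Ioo p m <;> by_cases hB : ∃ r ∈ S, r ∈ Ioo m q
  · obtain ⟨l, hl, hl'⟩ := hA
    obtain ⟨r, hr, hr'⟩ := hB
    -- `S` meets each of `(p, m)` and `(m, q)` at most once, so `a₁ < p` and `q < b₃`,
    -- and then the edges `a₁q` and `pb₃` cross
    have ha₂p : a₂ ≤ p := not_lt.1 fun hpa₂ =>
      hG (h.adj_left_of_mem_Ioo_left hG hS ht hmt hnadj ha₃ ⟨hpa₂.trans h₂, h₃⟩)
        (h.adj_mid hG hS ha₂ ⟨hpa₂, h₂.trans h₃⟩ hr hr').1 hpa₂ h₂ h₃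
    have hqb₂ : q ≤ b₂ := not_lt.1 fun hb₂q =>
      hG (h.adj_mid hG hS hl hl' hb₂ ⟨h₄.trans h₅, hb₂q⟩).2
        (h.adj_right_of_mem_Ioo_right hG hS ha₁ (h₁.trans_le ha₂p) hb₁
          ⟨h₄, h₅.trans hb₂q⟩).symm h₄ h₅ hb₂q
    exact (hG (h.adj_right_of_notMem_Icc hG hS hr hr' ha₁
        (notMem_Icc_of_lt (h₁.trans_le ha₂p))).symm
      (h.adj_left_of_notMem_Icc hG hS hl hl' hb₃ (notMem_Icc_of_gt (hqb₂.trans_lt h₆)))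
      (h₁.trans_le ha₂p) (h.lt_mid.trans h.mid_lt) (hqb₂.trans_lt h₆)).elim
  · obtain ⟨l, hl, hl'⟩ := hA
    simp only [not_exists, not_and] at hB
    have hqb₂ : q < b₂ := (not_lt.1 fun hb₁q => hB b₁ hb₁ ⟨h₄, hb₁q⟩).trans_lt h₅
    exact ⟨p, h.subset_closedNeighborSet_left hG hS hm ht hmt hnadj hl hl' hB hb₂ hb₃ hqb₂ h₆⟩
  · simp only [not_exists, not_and] at hA
    obtain ⟨r, hr, hr'⟩ := hB
    have ha₂p : a₂ < p := h₂.trans_le (not_lt.1 fun hpa₃ => hA a₃ ha₃ ⟨hpa₃, h₃⟩)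
    exact ⟨q, h.subset_closedNeighborSet_right hG hS hm hr hr' hA ha₁ ha₂ h₁ ha₂p⟩
  · simp only [not_exists, not_and] at hA hB
    have ha₂p : a₂ < p := h₂.trans_le (not_lt.1 fun hpa₃ => hA a₃ ha₃ ⟨hpa₃, h₃⟩)
    have hqb₂ : q < b₂ := (not_lt.1 fun hb₁q => hB b₁ hb₁ ⟨h₄, hb₁q⟩).trans_lt h₅
    exact h.exists_subset_closedNeighborSet hG hS hm hA hB ha₁ ha₂ hb₂ hb₃ h₁ ha₂p hqb₂ h₆

theorem IsNoncrossing.exists_subset_closedNeighborSet [Finite V] (hG : G.IsNoncrossing)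
    {s : Finset V} (hs : G.square.IsClique (s : Set V)) (hcard : 7 ≤ s.card) :
    ∃ v, (s : Set V) ⊆ G.closedNeighborSet v := by
  obtain ⟨u, hus, hu⟩ := Finset.exists_subset_card_eq hcard
  set x := u.orderEmbOfFin hu
  have hx (i : Fin 7) : x i ∈ (s : Set V) := hus (u.orderEmbOfFin_mem hu i)
  have hlt (i j : Fin 7) (hij : i < j := by decide) : x i < x j := x.strictMono hij
  by_cases hdom : (s : Set V) ⊆ G.closedNeighborSet (x 3)
  · exact ⟨x 3, hdom⟩
  obtain ⟨t, ht, htm⟩ := not_subset.1 hdom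
  simp only [closedNeighborSet, mem_insert_iff, mem_neighborSet, not_or] at htm
  rcases Ne.lt_or_gt htm.1 with htm' | hmt
  · exact hG.dual.exists_subset_closedNeighborSet_of_not_adj hs (hx 6) (hx 5) (hx 4) (hx 3)
      (hx 2) (hx 1) (hx 0) (hlt 5 6) (hlt 4 5) (hlt 3 4) (hlt 2 3) (hlt 1 2) (hlt 0 1) ht htm'
      htm.2
  · exact hG.exists_subset_closedNeighborSet_of_not_adj hs (hx 0) (hx 1) (hx 2) (hx 3) (hx 4)
      (hx 5) (hx 6) (hlt 0 1) (hlt 1 2) (hlt 2 3) (hlt 3 4) (hlt 4 5) (hlt 5 6) ht hmt htm.2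

end Noncrossing

theorem isClique_square_closedNeighborSet (G : SimpleGraph V) (v : V) :
    G.square.IsClique (G.closedNeighborSet v) := by
  intro a ha b hb hab
  refine ⟨hab, ?_⟩
  rcases ha with rfl | ha <;> rcases hb with rfl | hb
  · exact (hab rfl).elim
  · exact Or.inl hb
  · exact Or.inl ha.symm
  · exact Or.inr ⟨v, ha.symm, hb⟩

theorem ncard_closedNeighborSet [Finite V] (G : SimpleGraph V) (v : V) :
    (G.closedNeighborSet v).ncard = G.deg v + 1 :=
  ncard_insert_of_notMem G.notMem_neighborSet_self

theorem deg_add_one_le_cliqueNum_square [Finite V] (G : SimpleGraph V) (v : V) :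
    G.deg v + 1 ≤ G.square.cliqueNum := by
  obtain ⟨s, hs⟩ := (toFinite (G.closedNeighborSet v)).exists_finset_coe
  have hclique := G.isClique_square_closedNeighborSet v
  rw [← hs] at hclique
  rw [← G.ncard_closedNeighborSet, ← hs, ncard_coe_finset]
  exact hclique.card_le_cliqueNum

theorem card_le_deg_add_one [Finite V] {G : SimpleGraph V} {s : Finset V} {v : V}
    (hs : (s : Set V) ⊆ G.closedNeighborSet v) : s.card ≤ G.deg v + 1 := by
  rw [← G.ncard_closedNeighborSet, ← ncard_coe_finset]
  exact ncard_le_ncard hs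

theorem deg_le_maxDeg [Fintype V] (G : SimpleGraph V) (v : V) : G.deg v ≤ G.maxDeg :=
  Finset.le_sup (Finset.mem_univ v)

theorem exists_deg_eq_maxDeg [Fintype V] [Nonempty V] (G : SimpleGraph V) :
    ∃ v, G.deg v = G.maxDeg := by
  obtain ⟨v, -, hv⟩ := Finset.exists_mem_eq_sup Finset.univ Finset.univ_nonempty G.deg
  exact ⟨v, hv.symm⟩

end SimpleGraph

/-- For a finite outerplanar graph `G` with maximum degree
`Δ ≥ 5`, `ω(G²) = Δ + 1`. -/
theorem stmt14 {V : Type*} [Fintype V] (G : SimpleGraph V)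
    (hout : G.IsOuterplanar) (hΔ : 5 ≤ G.maxDeg) :
    G.square.cliqueNum = G.maxDeg + 1 := by
  obtain ⟨f, hf, hcross⟩ := hout
  let : LinearOrder V := LinearOrder.lift' f hf
  have hG : G.IsNoncrossing := fun a b c d hac hbd hab hbc hcd =>
    hcross a c b d hac hbd ⟨hab, hbc, hcd⟩
  have : Nonempty V := by
    contrapose! hΔ
    simp [maxDeg]
  obtain ⟨v, hv⟩ := G.exists_deg_eq_maxDeg
  refine le_antisymm ?_ (hv ▸ G.deg_add_one_le_cliqueNum_square v)
  obtain ⟨s, hs⟩ := G.square.exists_isNClique_cliqueNum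
  rw [← hs.card_eq]
  rcases le_or_gt s.card 6 with hsmall | hlarge
  · omega
  obtain ⟨w, hw⟩ := hG.exists_subset_closedNeighborSet hs.isClique hlarge
  exact (card_le_deg_add_one hw).trans (Nat.add_le_add_right (G.deg_le_maxDeg w) 1)
end
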